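/- Let Q be an N×U real matrix with nonnegative entries, let Z_1,…,Z_M : ℝ^U → ℝ be monotone on componentwise-nonnegative vectors, and assume Q̃(A_root) − Q̃(A_null) > 0. Let O and U be finite nonempty sets of M×N allocation matrices (entries 0 or 1) such that every allocation u ∈ U satisfies u ≤ p entrywise for some p ∈ O. Then the minimum of the Normalized Allocation Cost over U is at least its minimum over O: min_{u ∈ U} f_NAC(u) ≥ min_{p ∈ O} f_NAC(p). -/
import Mathlib


/-- A binary allocation matrix: every entry is 0 or 1. -/
def IsAlloc {M N : ℕ} (A : Matrix (Fin M) (Fin N) ℝ) : Prop :=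
  ∀ i j, A i j = 0 ∨ A i j = 1

/-- A trait-efficacy map is monotone on componentwise-nonnegative vectors. -/
def MonotoneEff {U : ℕ} (Z : (Fin U → ℝ) → ℝ) : Prop :=
  ∀ x y : Fin U → ℝ, (∀ u, 0 ≤ x u) → (∀ u, 0 ≤ y u) → (∀ u, x u ≤ y u) → Z x ≤ Z y

/-- Total allocation efficacy: `Q̃(A) = ∑ m, Z m ((A ⬝ Q) m)`. -/
noncomputable def totalEff {M N U : ℕ} (Q : Matrix (Fin N) (Fin U) ℝ)
    (Z : Fin M → (Fin U → ℝ) → ℝ) (A : Matrix (Fin M) (Fin N) ℝ) : ℝ :=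
  ∑ m, Z m ((A * Q) m)

/-- The all-ones (root) allocation. -/
def Aroot (M N : ℕ) : Matrix (Fin M) (Fin N) ℝ := fun _ _ => 1

/-- The all-zeros (null) allocation. -/
def Anull (M N : ℕ) : Matrix (Fin M) (Fin N) ℝ := fun _ _ => 0

/-- Normalized Allocation Cost. -/
noncomputable def fNAC {M N U : ℕ} (Q : Matrix (Fin N) (Fin U) ℝ)
    (Z : Fin M → (Fin U → ℝ) → ℝ) (A : Matrix (Fin M) (Fin N) ℝ) : ℝ :=
  (totalEff Q Z (Aroot M N) - totalEff Q Z A) /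
    (totalEff Q Z (Aroot M N) - totalEff Q Z (Anull M N))

lemma totalEff_mono {M N U : ℕ} (Q : Matrix (Fin N) (Fin U) ℝ) (hQ : ∀ i u, 0 ≤ Q i u)
    (Z : Fin M → (Fin U → ℝ) → ℝ) (hZ : ∀ m, MonotoneEff (Z m))
    (A B : Matrix (Fin M) (Fin N) ℝ) (hA : ∀ i j, 0 ≤ A i j)
    (hAB : ∀ i j, A i j ≤ B i j) : totalEff Q Z A ≤ totalEff Q Z B := by
  apply Finset.sum_le_sum
  intro m _
  apply hZ m
  · intro u
    rw [Matrix.mul_apply]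
    exact Finset.sum_nonneg fun j _ => mul_nonneg (hA m j) (hQ j u)
  · intro u
    rw [Matrix.mul_apply]
    exact Finset.sum_nonneg fun j _ => mul_nonneg (le_trans (hA m j) (hAB m j)) (hQ j u)
  · intro u
    rw [Matrix.mul_apply, Matrix.mul_apply]
    exact Finset.sum_le_sum fun j _ => mul_le_mul_of_nonneg_right (hAB m j) (hQ j u)

theorem min_fNAC_unopened_ge_min_opened {M N U : ℕ}
    (Q : Matrix (Fin N) (Fin U) ℝ) (hQ : ∀ i u, 0 ≤ Q i u)
    (Z : Fin M → (Fin U → ℝ) → ℝ) (hZ : ∀ m, MonotoneEff (Z m))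
    (hD : 0 < totalEff Q Z (Aroot M N) - totalEff Q Z (Anull M N))
    (Op Un : Finset (Matrix (Fin M) (Fin N) ℝ))
    (hOp : Op.Nonempty) (hUn : Un.Nonempty)
    (hOpAlloc : ∀ P ∈ Op, IsAlloc P) (hUnAlloc : ∀ A ∈ Un, IsAlloc A)
    (hdesc : ∀ u ∈ Un, ∃ p ∈ Op, ∀ i j, u i j ≤ p i j) :
    Op.inf' hOp (fNAC Q Z) ≤ Un.inf' hUn (fNAC Q Z) := by
  apply Finset.le_inf'
  intro u hu
  obtain ⟨p, hp, hup⟩ := hdesc u hu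
  refine le_trans (Finset.inf'_le _ hp) ?_
  unfold fNAC
  rw [div_le_div_iff_of_pos_right hD]
  have := totalEff_mono Q hQ Z hZ u p
    (fun i j => by rcases hUnAlloc u hu i j with h | h <;> simp [h]) hup
  linarith
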